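/- arXiv:1312.6012 — 4 statements merged into one kernel-verified Lean document; each statement's English description precedes it below -/
import Mathlib

section
/- Let T ≥ 0, B > 0 and ε > 0 be real numbers. Let f, r : ℝ → ℝ be functions differentiable on [0,T] such that for all s ∈ [0,T]: 0 ≤ f(s) ≤ 2ε, |r'(s)| ≤ B·f(s)³, and |f'(s)| ≤ r(s), and such that r(0) ≤ ε² and f(0) ≤ ε. Then f(t) ≤ ε + ε²·t + 4Bε³·t² for all t ∈ [0,T]. -/
/-!
Since `0 ≤ f ≤ 2ε`, the bound on `r'` gives `r' ≤ 8Bε³`, so `r(t) ≤ ε² + 8Bε³t`; then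
`f' ≤ |f'| ≤ r` integrates to the quadratic bound.
-/

open Set

theorem sub_le_sub_of_hasDerivWithinAt_le {D : Set ℝ} (hD : Convex ℝ D) {f g f' g' : ℝ → ℝ}
    (hf : ∀ x ∈ D, HasDerivWithinAt f (f' x) D x) (hg : ∀ x ∈ D, HasDerivWithinAt g (g' x) D x)
    (hle : ∀ x ∈ interior D, f' x ≤ g' x) {a b : ℝ} (ha : a ∈ D) (hb : b ∈ D) (hab : a ≤ b) :
    f b - f a ≤ g b - g a := by
  have hmono : MonotoneOn (fun x ↦ g x - f x) D := by
    refine monotoneOn_of_hasDerivWithinAt_nonneg hD (f' := fun x ↦ g' x - f' x)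
      (fun x hx ↦ ((hg x hx).sub (hf x hx)).continuousWithinAt)
      (fun x hx ↦ ((hg x (interior_subset hx)).sub (hf x (interior_subset hx))).mono
        interior_subset) (fun x hx ↦ sub_nonneg.2 (hle x hx))
  linarith [hmono ha hb hab]

theorem quadratic_bound_for_f_general
    (T B ε : ℝ) (hB : 0 < B)
    (f r f' r' : ℝ → ℝ)
    (hfderiv : ∀ s ∈ Set.Icc (0:ℝ) T, HasDerivWithinAt f (f' s) (Set.Icc 0 T) s)
    (hrderiv : ∀ s ∈ Set.Icc (0:ℝ) T, HasDerivWithinAt r (r' s) (Set.Icc 0 T) s)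
    (hf : ∀ s ∈ Set.Icc (0:ℝ) T, 0 ≤ f s ∧ f s ≤ 2 * ε)
    (hr' : ∀ s ∈ Set.Icc (0:ℝ) T, |r' s| ≤ B * f s ^ 3)
    (hf' : ∀ s ∈ Set.Icc (0:ℝ) T, |f' s| ≤ r s)
    (hr0 : r 0 ≤ ε ^ 2) (hf0 : f 0 ≤ ε) :
    ∀ t ∈ Set.Icc (0:ℝ) T, f t ≤ ε + ε ^ 2 * t + 4 * B * ε ^ 3 * t ^ 2 := by
  intro t ht
  have h0 : (0 : ℝ) ∈ Icc 0 T := ⟨le_rfl, ht.1.trans ht.2⟩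
  have hr'_le : ∀ s ∈ Icc 0 T, r' s ≤ 8 * B * ε ^ 3 := fun s hs ↦ calc
    r' s ≤ B * f s ^ 3 := (le_abs_self _).trans (hr' s hs)
    _ ≤ B * (2 * ε) ^ 3 := by gcongr; exacts [(hf s hs).1, (hf s hs).2]
    _ = 8 * B * ε ^ 3 := by ring
  have hlin : ∀ x, HasDerivWithinAt (fun s ↦ 8 * B * ε ^ 3 * s) (8 * B * ε ^ 3) (Icc 0 T) x :=
    fun x ↦ ((hasDerivAt_id' x).hasDerivWithinAt.const_mul _).congr_deriv (mul_one _)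
  have hr_le : ∀ s ∈ Icc 0 T, r s ≤ ε ^ 2 + 8 * B * ε ^ 3 * s := fun s hs ↦ by
    have hr_incr := sub_le_sub_of_hasDerivWithinAt_le (convex_Icc 0 T) hrderiv
      (fun x _ ↦ hlin x) (fun x hx ↦ hr'_le x (interior_subset hx)) h0 hs hs.1
    linarith
  have hquad : ∀ x, HasDerivWithinAt (fun s ↦ ε ^ 2 * s + 4 * B * ε ^ 3 * s ^ 2)
      (ε ^ 2 + 8 * B * ε ^ 3 * x) (Icc 0 T) x := fun x ↦
    (((hasDerivAt_id' x).hasDerivWithinAt.const_mul _).add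
      (((hasDerivAt_id' x).hasDerivWithinAt.pow 2).const_mul _)).congr_deriv (by ring)
  have hf_incr := sub_le_sub_of_hasDerivWithinAt_le (convex_Icc 0 T) hfderiv
    (fun x _ ↦ hquad x)
    (fun x hx ↦ ((le_abs_self _).trans (hf' x (interior_subset hx))).trans
      (hr_le x (interior_subset hx))) h0 ht ht.1
  linarith

/-- Quadratic upper bound on `f` from the proof of the shadowing lemma (Lemma 2.5):
if on `[0,T]` one has `0 ≤ f ≤ 2ε`, `|r'| ≤ B·f³`, `|f'| ≤ r`, with `r(0) ≤ ε²` and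
`f(0) ≤ ε`, then `f(t) ≤ ε + ε²·t + 4Bε³·t²` on `[0,T]`. -/
theorem quadratic_bound_for_f
    (T B ε : ℝ) (hT : 0 ≤ T) (hB : 0 < B) (hε : 0 < ε)
    (f r f' r' : ℝ → ℝ)
    (hfderiv : ∀ s ∈ Set.Icc (0:ℝ) T, HasDerivWithinAt f (f' s) (Set.Icc 0 T) s)
    (hrderiv : ∀ s ∈ Set.Icc (0:ℝ) T, HasDerivWithinAt r (r' s) (Set.Icc 0 T) s)
    (hf : ∀ s ∈ Set.Icc (0:ℝ) T, 0 ≤ f s ∧ f s ≤ 2 * ε)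
    (hr' : ∀ s ∈ Set.Icc (0:ℝ) T, |r' s| ≤ B * f s ^ 3)
    (hf' : ∀ s ∈ Set.Icc (0:ℝ) T, |f' s| ≤ r s)
    (hr0 : r 0 ≤ ε ^ 2) (hf0 : f 0 ≤ ε) :
    ∀ t ∈ Set.Icc (0:ℝ) T, f t ≤ ε + ε ^ 2 * t + 4 * B * ε ^ 3 * t ^ 2 :=
  quadratic_bound_for_f_general T B ε hB f r f' r' hfderiv hrderiv hf hr' hf' hr0 hf0
end

section
/- Let B > 1/4 and ε > 0 be real numbers. Let f, r : ℝ → ℝ be differentiable on [0,∞) with f(0) ≤ ε, r(0) ≤ ε², f(s) ≥ 0 for all s ≥ 0, and suppose that for all s ≥ 0 one has |f'(s)| ≤ r(s) and |r'(s)| ≤ B·f(s)³. Then f(t) ≤ 2ε for all t ∈ [0, 1/(8Bε)]. -/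
/-! A continuity (bootstrap) argument. As long as `f ≤ 2ε`, the bound `|r'| ≤ B f³` keeps
`r ≤ ε² + 8Bε³ t ≤ 2ε²` for `t ≤ 1/(8Bε)`, and then `|f'| ≤ r` gives
`f ≤ ε + 2ε² t ≤ ε + ε/(4B)`, which is strictly below `2ε` because `B > 1/4`.
Since the a priori bound improves strictly, there is no first time at which `f` exceeds `2ε`. -/

open Set Topology

/-- Continuous induction: `t₀ = inf {t | c < g t}` would satisfy `g t₀ < c`, and continuity then
keeps `g < c` on a neighbourhood of `t₀`. -/
theorem ContinuousOn.le_of_forall_le_on_Ico_imp_lt {g : ℝ → ℝ} {a b c : ℝ}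
    (hg : ContinuousOn g (Icc a b))
    (hstep : ∀ t ∈ Icc a b, (∀ u ∈ Ico a t, g u ≤ c) → g t < c) :
    ∀ t ∈ Icc a b, g t ≤ c := by
  by_contra! hbad
  set S := {t | t ∈ Icc a b ∧ c < g t}
  have hSne : S.Nonempty := let ⟨t, ht, hgt⟩ := hbad; ⟨t, ht, hgt⟩
  have hSbdd : BddBelow S := ⟨a, fun x hx => hx.1.1⟩
  obtain ⟨t₁, ht₁, -⟩ := hbad
  set t₀ := sInf S
  have ht₀ : t₀ ∈ Icc a b :=
    ⟨le_csInf hSne fun x hx => hx.1.1, csInf_le_of_le hSbdd hSne.some_mem hSne.some_mem.1.2⟩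
  have hlt : g t₀ < c := hstep t₀ ht₀ fun u hu => by
    by_contra! hcu
    exact (csInf_le hSbdd ⟨⟨hu.1, hu.2.le.trans ht₀.2⟩, hcu⟩).not_gt hu.2
  have hnear : ∀ᶠ x in 𝓝 t₀, x ∈ Icc a b → g x < c :=
    eventually_nhdsWithin_iff.1 ((hg t₀ ht₀).eventually_lt continuousWithinAt_const hlt)
  obtain ⟨x, hxS, hxlt⟩ :=
    ((mem_closure_iff_frequently.1 (csInf_mem_closure hSne hSbdd)).and_eventually hnear).exists
  exact (hxlt hxS.1).not_gt hxS.2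

theorem le_add_mul_sub_of_hasDerivWithinAt_Ici {f f' : ℝ → ℝ} {a t C : ℝ}
    (hderiv : ∀ s ∈ Ici a, HasDerivWithinAt f (f' s) (Ici a) s)
    (hbound : ∀ s ∈ Ico a t, |f' s| ≤ C) (hat : a ≤ t) :
    f t ≤ f a + C * (t - a) := by
  have h := norm_image_sub_le_of_norm_deriv_le_segment'
    (fun s hs => (hderiv s hs.1).mono Icc_subset_Ici_self) hbound t ⟨hat, le_rfl⟩
  linarith [le_abs_self (f t - f a), Real.norm_eq_abs (f t - f a)]

theorem shadowing_f_lt_of_le_on_Ico {B ε t : ℝ} (hB : 1/4 < B) (hε : 0 < ε)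
    {f r f' r' : ℝ → ℝ}
    (hfderiv : ∀ s ∈ Ici (0:ℝ), HasDerivWithinAt f (f' s) (Ici 0) s)
    (hrderiv : ∀ s ∈ Ici (0:ℝ), HasDerivWithinAt r (r' s) (Ici 0) s)
    (hf0 : f 0 ≤ ε) (hr0 : r 0 ≤ ε ^ 2)
    (hfpos : ∀ s ∈ Ici (0:ℝ), 0 ≤ f s)
    (hf' : ∀ s ∈ Ici (0:ℝ), |f' s| ≤ r s)
    (hr' : ∀ s ∈ Ici (0:ℝ), |r' s| ≤ B * f s ^ 3)
    (ht : t ∈ Icc (0:ℝ) (1 / (8 * B * ε))) (hbound : ∀ u ∈ Ico 0 t, f u ≤ 2 * ε) :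
    f t < 2 * ε := by
  have hB0 : 0 < B := by linarith
  have htT : 8 * B * ε * t ≤ 1 := by
    rw [mul_comm]; exact (le_div_iff₀ (by positivity)).1 ht.2
  have hr'_le : ∀ s ∈ Ico (0:ℝ) t, |r' s| ≤ 8 * B * ε ^ 3 := fun s hs =>
    calc |r' s| ≤ B * f s ^ 3 := hr' s hs.1
      _ ≤ B * (2 * ε) ^ 3 := by gcongr; exacts [hfpos s hs.1, hbound s hs]
      _ = 8 * B * ε ^ 3 := by ring
  have hr_le : ∀ u ∈ Ico (0:ℝ) t, r u ≤ 2 * ε ^ 2 := fun u hu => by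
    have h := le_add_mul_sub_of_hasDerivWithinAt_Ici hrderiv
      (fun s hs => hr'_le s ⟨hs.1, hs.2.trans hu.2⟩) hu.1
    nlinarith [mul_le_mul_of_nonneg_left hu.2.le (by positivity : 0 ≤ 8 * B * ε ^ 3)]
  have hf_le := le_add_mul_sub_of_hasDerivWithinAt_Ici hfderiv
    (fun s hs => (hf' s hs.1).trans (hr_le s hs)) ht.1
  nlinarith [mul_pos hε hε]

/-- Analytic core of the shadowing lemma (Lemma 2.5): if `f, r` are differentiable
on `[0,∞)` with `f(0) ≤ ε`, `r(0) ≤ ε²`, `f ≥ 0`, `|f'| ≤ r` and `|r'| ≤ B·f³` on `[0,∞)`,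
and `B > 1/4`, then `f(t) ≤ 2ε` for all `t ∈ [0, 1/(8Bε)]`. -/
theorem shadowing_lemma_f_bound
    (B ε : ℝ) (hB : 1/4 < B) (hε : 0 < ε)
    (f r f' r' : ℝ → ℝ)
    (hfderiv : ∀ s ∈ Set.Ici (0:ℝ), HasDerivWithinAt f (f' s) (Set.Ici 0) s)
    (hrderiv : ∀ s ∈ Set.Ici (0:ℝ), HasDerivWithinAt r (r' s) (Set.Ici 0) s)
    (hf0 : f 0 ≤ ε) (hr0 : r 0 ≤ ε ^ 2)
    (hfpos : ∀ s ∈ Set.Ici (0:ℝ), 0 ≤ f s)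
    (hf' : ∀ s ∈ Set.Ici (0:ℝ), |f' s| ≤ r s)
    (hr' : ∀ s ∈ Set.Ici (0:ℝ), |r' s| ≤ B * f s ^ 3) :
    ∀ t ∈ Set.Icc (0:ℝ) (1 / (8 * B * ε)), f t ≤ 2 * ε := by
  have hfc : ContinuousOn f (Icc 0 (1 / (8 * B * ε))) := fun s hs =>
    (hfderiv s hs.1).continuousWithinAt.mono Icc_subset_Ici_self
  exact hfc.le_of_forall_le_on_Ico_imp_lt fun t ht =>
    shadowing_f_lt_of_le_on_Ico hB hε hfderiv hrderiv hf0 hr0 hfpos hf' hr' ht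
end

section
/- Let B > 1/4 and ε > 0 be real numbers. Let f, r : ℝ → ℝ be differentiable on [0,∞) with f(0) ≤ ε, r(0) ≤ ε², f(s) ≥ 0 for all s ≥ 0, and suppose that for all s ≥ 0 one has |f'(s)| ≤ r(s) and |r'(s)| ≤ B·f(s)³. Then r(t) ≤ 2ε² for all t ∈ [0, 1/(8Bε)]. -/
/-! `r` can only grow at rate `B f³`, so as long as `f ≤ 2ε` it grows by at most
`8Bε³ t ≤ ε²` up to time `1/(8Bε)`; conversely, as long as `r ≤ 2ε²`, `f` grows by at most
`2ε² t ≤ ε/(4B) < ε`. A continuity argument (take the first time where `f` reaches `2ε`) closes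
the bootstrap. -/

open Set

theorem lt_of_forall_le_on_Ico_imp_lt {g : ℝ → ℝ} {a b c : ℝ} (hg : ContinuousOn g (Icc a b))
    (hstep : ∀ t ∈ Icc a b, (∀ s ∈ Ico a t, g s ≤ c) → g t < c) :
    ∀ t ∈ Icc a b, g t < c := by
  by_contra! hbad
  set S := Icc a b ∩ g ⁻¹' Ici c
  have hS : IsClosed S := hg.preimage_isClosed_of_isClosed isClosed_Icc isClosed_Ici
  have hS_bdd : BddBelow S := ⟨a, fun x hx => hx.1.1⟩
  obtain ⟨ht₀, hgt₀⟩ : sInf S ∈ S := hS.csInf_mem hbad hS_bdd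
  refine (hstep _ ht₀ fun s hs => ?_).not_ge hgt₀
  by_contra! hgs
  exact hs.2.not_ge <| csInf_le hS_bdd ⟨⟨hs.1, hs.2.le.trans ht₀.2⟩, hgs.le⟩

theorem le_add_mul_of_abs_deriv_le {g g' : ℝ → ℝ} {a t C : ℝ} (hat : a ≤ t)
    (hg : ∀ s ∈ Ici a, HasDerivWithinAt g (g' s) (Ici a) s)
    (hbound : ∀ s ∈ Ico a t, |g' s| ≤ C) :
    g t ≤ g a + C * (t - a) := by
  have hmvt : |g t - g a| ≤ C * (t - a) := norm_image_sub_le_of_norm_deriv_le_segment'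
    (fun s hs => (hg s hs.1).mono Icc_subset_Ici_self) hbound t ⟨hat, le_rfl⟩
  exact sub_le_iff_le_add'.1 ((le_abs_self _).trans hmvt)

theorem shadowing_lemma_r_bound_general
    (B ε : ℝ) (hB : 1/4 < B) (hε : 0 < ε)
    (f r f' r' : ℝ → ℝ)
    (hfderiv : ∀ s ∈ Set.Ici (0:ℝ), HasDerivWithinAt f (f' s) (Set.Ici 0) s)
    (hrderiv : ∀ s ∈ Set.Ici (0:ℝ), HasDerivWithinAt r (r' s) (Set.Ici 0) s)
    (hf0 : f 0 ≤ ε) (hr0 : r 0 ≤ ε ^ 2)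
    (hf' : ∀ s ∈ Set.Ici (0:ℝ), |f' s| ≤ r s)
    (hr' : ∀ s ∈ Set.Ici (0:ℝ), |r' s| ≤ B * f s ^ 3) :
    ∀ t ∈ Set.Icc (0:ℝ) (1 / (8 * B * ε)), r t ≤ 2 * ε ^ 2 := by
  have hB0 : 0 < B := by linarith
  have htime : ∀ t ∈ Icc (0:ℝ) (1 / (8 * B * ε)), t * (8 * B * ε) ≤ 1 := fun t ht =>
    (le_div_iff₀ (by positivity)).1 ht.2
  have hr_le : ∀ t ∈ Icc (0:ℝ) (1 / (8 * B * ε)), (∀ s ∈ Ico 0 t, f s ≤ 2 * ε) →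
      r t ≤ 2 * ε ^ 2 := fun t ht hf => by
    have hcube : ∀ s ∈ Ico 0 t, |r' s| ≤ B * (2 * ε) ^ 3 := fun s hs =>
      (hr' s hs.1).trans <| mul_le_mul_of_nonneg_left ((Odd.pow_le_pow ⟨1, rfl⟩).2 (hf s hs)) hB0.le
    nlinarith [le_add_mul_of_abs_deriv_le ht.1 hrderiv hcube, htime t ht]
  have hf_lt : ∀ t ∈ Icc (0:ℝ) (1 / (8 * B * ε)), f t < 2 * ε :=
    lt_of_forall_le_on_Ico_imp_lt
      (fun s hs => ((hfderiv s hs.1).continuousWithinAt).mono Icc_subset_Ici_self)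
      fun t ht hf => by
        have hr : ∀ s ∈ Ico 0 t, |f' s| ≤ 2 * ε ^ 2 := fun s hs =>
          (hf' s hs.1).trans <| hr_le s ⟨hs.1, hs.2.le.trans ht.2⟩ fun u hu =>
            hf u ⟨hu.1, hu.2.trans hs.2⟩
        nlinarith [le_add_mul_of_abs_deriv_le ht.1 hfderiv hr, htime t ht, mul_pos hε hε]
  exact fun t ht => hr_le t ht fun s hs => (hf_lt s ⟨hs.1, hs.2.le.trans ht.2⟩).le

/-- Strengthening of the shadowing lemma (Lemma 2.5): under the Clairaut-type
differential inequalities `|f'| ≤ r` and `|r'| ≤ B·f³` on `[0,∞)` with `f ≥ 0`,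
`f(0) ≤ ε`, `r(0) ≤ ε²` and `B > 1/4`, one has `r(t) ≤ 2ε²` for all `t ∈ [0, 1/(8Bε)]`. -/
theorem shadowing_lemma_r_bound
    (B ε : ℝ) (hB : 1/4 < B) (hε : 0 < ε)
    (f r f' r' : ℝ → ℝ)
    (hfderiv : ∀ s ∈ Set.Ici (0:ℝ), HasDerivWithinAt f (f' s) (Set.Ici 0) s)
    (hrderiv : ∀ s ∈ Set.Ici (0:ℝ), HasDerivWithinAt r (r' s) (Set.Ici 0) s)
    (hf0 : f 0 ≤ ε) (hr0 : r 0 ≤ ε ^ 2)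
    (hfpos : ∀ s ∈ Set.Ici (0:ℝ), 0 ≤ f s)
    (hf' : ∀ s ∈ Set.Ici (0:ℝ), |f' s| ≤ r s)
    (hr' : ∀ s ∈ Set.Ici (0:ℝ), |r' s| ≤ B * f s ^ 3) :
    ∀ t ∈ Set.Icc (0:ℝ) (1 / (8 * B * ε)), r t ≤ 2 * ε ^ 2 :=
  shadowing_lemma_r_bound_general B ε hB hε f r f' r' hfderiv hrderiv hf0 hr0 hf' hr'
end

section
/- Let (X, d) be a metric space equipped with a probability measure μ, and let φ : ℝ → X → X be a family of measurable maps. Let γ ∈ ℝ and let m, c₀, K₁, K₂, C₀, C, ε₀ be positive real numbers. Suppose a : X → ℝ is measurable with 0 ≤ a ≤ 1, Lipschitz with constant K₁, and ∫ a dμ ≥ m. Suppose that for every ε ∈ (0, ε₀) there is a measurable function b_ε : X → ℝ with 0 ≤ b_ε ≤ 1, Lipschitz with constant K₂/ε², with ∫ b_ε dμ ≥ c₀·ε⁸, such that a(x)·b_ε(φ(1/(C₀ε))(x)) = 0 for all x ∈ X, and such that the decay-of-correlations bound |∫ a·(b_ε ∘ φ(t)) dμ − (∫ a dμ)(∫ b_ε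 dμ)| ≤ C·t^{−γ}·(1 + K₁)·(1 + K₂/ε²) holds for all t ≥ 1. Then γ ≤ 10. -/
/-!
Suppose `γ > 10`. At time `t = 1/(C₀ε)` the correlation `∫ a·(b_ε ∘ φ t)` vanishes, so the decay
bound controls the product of the integrals alone: `m c₀ ε⁸ ≤ C (C₀ε)^γ (1 + K₁)(1 + K₂/ε²)`, i.e.
`m c₀ ε¹⁰ ≤ ε^γ · O(1)` as `ε → 0⁺`, which is impossible.
-/

open MeasureTheory Filter Topology

theorem Real.one_div_rpow_neg {x : ℝ} (hx : 0 ≤ x) (y : ℝ) : (1 / x) ^ (-y) = x ^ y := by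
  rw [one_div, Real.rpow_neg (inv_nonneg.mpr hx), Real.inv_rpow hx, inv_inv]

theorem le_of_eventually_mul_rpow_le {p q A L : ℝ} {h : ℝ → ℝ} (hA : 0 < A)
    (hh : Tendsto h (𝓝[>] 0) (𝓝 L))
    (hle : ∀ᶠ ε in 𝓝[>] 0, A * ε ^ p ≤ ε ^ q * h ε) : q ≤ p := by
  by_contra! hpq
  have hpow : Tendsto (fun ε : ℝ => ε ^ (q - p)) (𝓝[>] 0) (𝓝 0) := by
    have := Real.continuousAt_rpow_const 0 (q - p) (.inr (sub_pos.mpr hpq).le)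
    rw [ContinuousAt, Real.zero_rpow (sub_pos.mpr hpq).ne'] at this
    exact this.mono_left nhdsWithin_le_nhds
  have hA_le : ∀ᶠ ε in 𝓝[>] 0, A ≤ ε ^ (q - p) * h ε := by
    filter_upwards [self_mem_nhdsWithin, hle] with ε (hε : 0 < ε) hε_le
    rw [Real.rpow_sub hε, div_mul_eq_mul_div, le_div_iff₀ (Real.rpow_pos_of_pos hε p)]
    linarith
  have := ge_of_tendsto (by simpa using hpow.mul hh) hA_le
  linarith

theorem rate_of_mixing_at_most_polynomial_general
    {X : Type*} [MetricSpace X] [MeasurableSpace X]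
    (μ : Measure X)
    (φ : ℝ → X → X)
    (γ m c₀ K₁ K₂ C₀ C ε₀ : ℝ)
    (hm : 0 < m) (hc₀ : 0 < c₀)
    (hC₀ : 0 < C₀) (hε₀ : 0 < ε₀)
    (a : X → ℝ)
    (ha_int : m ≤ ∫ x, a x ∂μ)
    (hb : ∀ ε ∈ Set.Ioo (0:ℝ) ε₀, ∃ b : X → ℝ,
      Measurable b ∧
      (∀ x, 0 ≤ b x ∧ b x ≤ 1) ∧
      (∀ x y, |b x - b y| ≤ (K₂ / ε ^ 2) * dist x y) ∧
      c₀ * ε ^ 8 ≤ ∫ x, b x ∂μ ∧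
      (∀ x, a x * b (φ (1 / (C₀ * ε)) x) = 0) ∧
      (∀ t : ℝ, 1 ≤ t →
        |(∫ x, a x * b (φ t x) ∂μ) - (∫ x, a x ∂μ) * (∫ x, b x ∂μ)| ≤
          C * t ^ (-γ) * (1 + K₁) * (1 + K₂ / ε ^ 2))) :
    γ ≤ 10 := by
  have hsmall : ∀ᶠ ε in 𝓝[>] (0 : ℝ), ε < min ε₀ (1 / C₀) :=
    nhdsWithin_le_nhds (eventually_lt_nhds (lt_min hε₀ (by positivity)))
  refine le_of_eventually_mul_rpow_le (mul_pos hm hc₀)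
    (h := fun ε => C * C₀ ^ γ * (1 + K₁) * (ε ^ 2 + K₂))
    ((Continuous.tendsto (by fun_prop) 0).mono_left nhdsWithin_le_nhds) ?_
  filter_upwards [self_mem_nhdsWithin, hsmall] with ε (hε : 0 < ε) hε_lt
  obtain ⟨hεε₀, hεC₀⟩ := lt_min_iff.mp hε_lt
  have hC₀ε : C₀ * ε ≤ 1 := ((lt_div_iff₀' hC₀).mp hεC₀).le
  obtain ⟨b, -, -, -, hb_int, hzero, hdecay⟩ := hb ε ⟨hε, hεε₀⟩
  have hcorr := hdecay _ (one_le_one_div (by positivity) hC₀ε)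
  simp only [hzero, integral_zero, zero_sub, abs_neg] at hcorr
  have hprod := (le_abs_self _).trans hcorr
  rw [Real.one_div_rpow_neg (by positivity), Real.mul_rpow hC₀.le hε.le] at hprod
  have hlower : m * c₀ * ε ^ 8 ≤ C * (C₀ ^ γ * ε ^ γ) * (1 + K₁) * (1 + K₂ / ε ^ 2) := by
    rw [mul_assoc]
    exact (mul_le_mul ha_int hb_int (by positivity) (hm.le.trans ha_int)).trans hprod
  calc m * c₀ * ε ^ (10 : ℝ) = m * c₀ * ε ^ 8 * ε ^ 2 := by norm_cast; ring
    _ ≤ C * (C₀ ^ γ * ε ^ γ) * (1 + K₁) * (1 + K₂ / ε ^ 2) * ε ^ 2 := by gcongr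
    _ = ε ^ γ * (C * C₀ ^ γ * (1 + K₁) * (ε ^ 2 + K₂)) := by field_simp

/-- Abstract form of the main argument of Theorem A: given an observable `a`
(bounded, Lipschitz with constant `K₁`, of integral at least `m`) and, for each
small `ε`, an observable `b_ε` (bounded, Lipschitz with constant `K₂/ε²`, of
integral at least `c₀·ε⁸`) with `a·(b_ε ∘ φ(1/(C₀ε))) ≡ 0`, a polynomial
decay-of-correlations bound with exponent `γ` forces `γ ≤ 10`. -/
theorem rate_of_mixing_at_most_polynomial
    {X : Type*} [MetricSpace X] [MeasurableSpace X]
    (μ : Measure X) [IsProbabilityMeasure μ]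
    (φ : ℝ → X → X) (hφ : ∀ t : ℝ, Measurable (φ t))
    (γ m c₀ K₁ K₂ C₀ C ε₀ : ℝ)
    (hm : 0 < m) (hc₀ : 0 < c₀) (hK₁ : 0 < K₁) (hK₂ : 0 < K₂)
    (hC₀ : 0 < C₀) (hC : 0 < C) (hε₀ : 0 < ε₀)
    (a : X → ℝ) (ha_meas : Measurable a)
    (ha01 : ∀ x, 0 ≤ a x ∧ a x ≤ 1)
    (ha_lip : ∀ x y, |a x - a y| ≤ K₁ * dist x y)
    (ha_int : m ≤ ∫ x, a x ∂μ)
    (hb : ∀ ε ∈ Set.Ioo (0:ℝ) ε₀, ∃ b : X → ℝ,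
      Measurable b ∧
      (∀ x, 0 ≤ b x ∧ b x ≤ 1) ∧
      (∀ x y, |b x - b y| ≤ (K₂ / ε ^ 2) * dist x y) ∧
      c₀ * ε ^ 8 ≤ ∫ x, b x ∂μ ∧
      (∀ x, a x * b (φ (1 / (C₀ * ε)) x) = 0) ∧
      (∀ t : ℝ, 1 ≤ t →
        |(∫ x, a x * b (φ t x) ∂μ) - (∫ x, a x ∂μ) * (∫ x, b x ∂μ)| ≤
          C * t ^ (-γ) * (1 + K₁) * (1 + K₂ / ε ^ 2))) :
    γ ≤ 10 :=
  rate_of_mixing_at_most_polynomial_general μ φ γ m c₀ K₁ K₂ C₀ C ε₀ hm hc₀ hC₀ hε₀ a ha_int hb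
end
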